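/- arXiv:2506.10655 — 4 statements merged into one kernel-verified Lean document; each statement's English description precedes it below -/
import Mathlib

section
/- Let d ≥ 2, let Ψ ∈ ℂ^d be a unit vector with rank-one projector P = Ψ Ψ†, let 0 ≤ λ < 1, and let Ω = P + λ(I − P). Let k, N be integers with k ≥ 0 and N ≥ k + 1, and let δ be a real number with B_{N,k}(1−λ) ≤ δ ≤ 1. Let J(N,k,δ) be the unique x ∈ [0,1] with B_{N,k}(x) = δ. Then the set { ⟨Ψ, σ Ψ⟩ : σ a density matrix on ℂ^d with B_{N,k}(1 − tr(Ω σ)) ≥ δ } has least element 1 − J(N,k,δ)/(1 − λ). In other words, the standard-QSV fidelity certificate satisfies F^S_λ(k,N,δ) = 1 − ν^{-1} J(N,k,δ) with ν = 1 − λ. -/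
/-!
For a trace-one state σ with fidelity F = ⟨Ψ, σΨ⟩, one test fails with probability
1 − tr(Ωσ) = (1 − λ)(1 − F). For k < N the map B_{N,k} is strictly decreasing on [0, 1]
(its derivative telescopes to −(N − k) C(N, k) p^k (1 − p)^(N−k−1)), so
B_{N,k}((1 − λ)(1 − F)) ≥ δ = B_{N,k}(J) exactly when (1 − λ)(1 − F) ≤ J, i.e.
F ≥ 1 − J/(1 − λ). Equality is attained by the state x P + (1 − x)/(d − 1) (I − P),
whose fidelity is x.
-/

open Matrix ComplexOrder

/-- The binomial cumulative distribution function: the probability of at most `k`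
successes in `z` independent Bernoulli trials with success probability `p`. -/
noncomputable def binomCDF (z k : ℕ) (p : ℝ) : ℝ :=
  ∑ j ∈ Finset.range (k + 1), (z.choose j : ℝ) * p ^ j * (1 - p) ^ (z - j)

theorem hasDerivAt_binomTerm (z j : ℕ) (p : ℝ) :
    HasDerivAt (fun p : ℝ => (z.choose j : ℝ) * p ^ j * (1 - p) ^ (z - j))
      (z.choose j * (j * p ^ (j - 1) * (1 - p) ^ (z - j)
        - (z - j : ℕ) * p ^ j * (1 - p) ^ (z - j - 1))) p := by
  have hpow : HasDerivAt (fun p : ℝ => (1 - p) ^ (z - j))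
      ((z - j : ℕ) * (1 - p) ^ (z - j - 1) * -1) p :=
    (hasDerivAt_pow (z - j) (1 - p)).comp p ((hasDerivAt_id p).const_sub 1)
  exact (((hasDerivAt_pow j p).const_mul _).mul hpow).congr_deriv (by ring)

theorem hasDerivAt_binomCDF (z k : ℕ) (p : ℝ) :
    HasDerivAt (binomCDF z k)
      (-((z - k : ℕ) * z.choose k * p ^ k * (1 - p) ^ (z - k - 1))) p := by
  induction k with
  | zero =>
    have hzero : binomCDF z 0 = fun p => (z.choose 0 : ℝ) * p ^ 0 * (1 - p) ^ (z - 0) := by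
      funext q; simp [binomCDF]
    rw [hzero]
    exact (hasDerivAt_binomTerm z 0 p).congr_deriv (by simp)
  | succ k ih =>
    have hsplit : binomCDF z (k + 1) = fun p => binomCDF z k p
        + (z.choose (k + 1) : ℝ) * p ^ (k + 1) * (1 - p) ^ (z - (k + 1)) := by
      funext q; simp [binomCDF, Finset.sum_range_succ]
    have hchoose : ((k : ℝ) + 1) * z.choose (k + 1) = (z - k : ℕ) * z.choose k := by
      rw [mul_comm, mul_comm ((z - k : ℕ) : ℝ)]
      exact_mod_cast Nat.choose_succ_right_eq z k
    rw [hsplit]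
    refine (ih.add (hasDerivAt_binomTerm z (k + 1) p)).congr_deriv ?_
    rw [show z - (k + 1) = z - k - 1 by omega, Nat.add_sub_cancel]
    push_cast
    linear_combination (p ^ k * (1 - p) ^ (z - k - 1)) * hchoose

theorem binomCDF_strictAntiOn {z k : ℕ} (hk : k < z) :
    StrictAntiOn (binomCDF z k) (Set.Icc 0 1) := by
  refine strictAntiOn_of_deriv_neg (convex_Icc 0 1)
    (fun p _ => (hasDerivAt_binomCDF z k p).continuousAt.continuousWithinAt) fun p hp => ?_
  rw [interior_Icc] at hp
  rw [(hasDerivAt_binomCDF z k p).deriv, neg_neg_iff_pos]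
  have hzk : (0 : ℝ) < (z - k : ℕ) := by exact_mod_cast Nat.sub_pos_of_lt hk
  have hchoose : (0 : ℝ) < z.choose k := by exact_mod_cast Nat.choose_pos hk.le
  exact mul_pos (mul_pos (mul_pos hzk hchoose) (pow_pos hp.1 k)) (pow_pos (sub_pos.mpr hp.2) _)

section
variable {n R : Type*} [Fintype n]

theorem Matrix.trace_vecMulVec_mul [CommSemiring R] (u v : n → R) (A : Matrix n n R) :
    (vecMulVec u v * A).trace = v ⬝ᵥ A *ᵥ u := by
  rw [vecMulVec_mul, trace_vecMulVec, dotProduct_comm, dotProduct_mulVec]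

theorem Matrix.isIdempotentElem_vecMulVec [CommSemiring R] {u v : n → R} (h : v ⬝ᵥ u = 1) :
    IsIdempotentElem (vecMulVec u v) := by
  rw [IsIdempotentElem, vecMulVec_mul_vecMulVec, h, one_smul]

variable [CommRing R] [PartialOrder R] [StarRing R] [StarOrderedRing R]

theorem Matrix.posSemidef_of_isHermitian_of_isIdempotentElem {Q : Matrix n n R}
    (hQ : Q.IsHermitian) (hQQ : IsIdempotentElem Q) : Q.PosSemidef := by
  have := posSemidef_self_mul_conjTranspose Q
  rwa [hQ.eq, hQQ.eq] at this

theorem Matrix.PosSemidef.trace_mul_nonneg_of_isIdempotentElem {Q A : Matrix n n R}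
    (hA : A.PosSemidef) (hQ : Q.IsHermitian) (hQQ : IsIdempotentElem Q) :
    0 ≤ (Q * A).trace := by
  have := (hA.mul_mul_conjTranspose_same Q).trace_nonneg
  rwa [trace_mul_cycle, hQ.eq, hQQ.eq] at this

theorem Matrix.isHermitian_one_sub_vecMulVec [DecidableEq n] (u : n → R) :
    (1 - vecMulVec u (star u)).IsHermitian :=
  isHermitian_one.sub (posSemidef_vecMulVec_self_star u).isHermitian

end

section
variable {n : Type*} [Fintype n] [DecidableEq n]

theorem one_sub_re_trace_homogeneous_mul (Ψ : n → ℂ) (l : ℝ) {σ : Matrix n n ℂ}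
    (hσ : σ.trace = 1) :
    1 - (((vecMulVec Ψ (star Ψ) + (l : ℂ) • (1 - vecMulVec Ψ (star Ψ))) * σ).trace).re
      = (1 - l) * (1 - (star Ψ ⬝ᵥ σ *ᵥ Ψ).re) := by
  rw [add_mul, smul_mul_assoc, sub_mul, one_mul, trace_add, trace_smul, trace_sub, hσ,
    trace_vecMulVec_mul]
  simp only [smul_eq_mul, Complex.add_re, Complex.re_ofReal_mul, Complex.sub_re,
    Complex.one_re]
  ring

theorem re_dotProduct_mulVec_mem_Icc {Ψ : n → ℂ} (hΨ : star Ψ ⬝ᵥ Ψ = 1) {σ : Matrix n n ℂ}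
    (hσ : σ.PosSemidef) (htr : σ.trace = 1) :
    (star Ψ ⬝ᵥ σ *ᵥ Ψ).re ∈ Set.Icc 0 1 := by
  have hle : 0 ≤ ((1 - vecMulVec Ψ (star Ψ)) * σ).trace :=
    hσ.trace_mul_nonneg_of_isIdempotentElem (isHermitian_one_sub_vecMulVec Ψ)
      (isIdempotentElem_vecMulVec hΨ).one_sub
  rw [sub_mul, one_mul, trace_sub, htr, trace_vecMulVec_mul] at hle
  exact ⟨(Complex.nonneg_iff.mp (hσ.dotProduct_mulVec_nonneg Ψ)).1,
    by simpa using (Complex.nonneg_iff.mp hle).1⟩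

theorem exists_density_matrix_dotProduct_mulVec_eq (hn : 1 < Fintype.card n) {Ψ : n → ℂ}
    (hΨ : star Ψ ⬝ᵥ Ψ = 1) {x : ℝ} (hx : x ∈ Set.Icc 0 1) :
    ∃ σ : Matrix n n ℂ, σ.PosSemidef ∧ σ.trace = 1 ∧ star Ψ ⬝ᵥ σ *ᵥ Ψ = x := by
  set P := vecMulVec Ψ (star Ψ)
  have hP : IsIdempotentElem P := isIdempotentElem_vecMulVec hΨ
  have htrP : P.trace = 1 := by rw [trace_vecMulVec, dotProduct_comm, hΨ]
  have hcard : (0 : ℝ) < Fintype.card n - 1 := by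
    rw [sub_pos]; exact_mod_cast hn
  set b := (1 - x) / (Fintype.card n - 1)
  refine ⟨x • P + b • (1 - P), ?_, ?_, ?_⟩
  · exact ((posSemidef_vecMulVec_self_star Ψ).smul hx.1).add
      ((posSemidef_of_isHermitian_of_isIdempotentElem (isHermitian_one_sub_vecMulVec Ψ)
        hP.one_sub).smul (div_nonneg (sub_nonneg.mpr hx.2) hcard.le))
  · rw [trace_add, trace_smul, trace_smul, trace_sub, trace_one, htrP]
    have hb : ((b * (Fintype.card n - 1) : ℝ) : ℂ) = ((1 - x : ℝ) : ℂ) :=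
      congrArg _ (div_mul_cancel₀ _ hcard.ne')
    push_cast at hb
    rw [Complex.real_smul, Complex.real_smul]
    linear_combination hb
  · rw [← trace_vecMulVec_mul, mul_add, mul_smul_comm, mul_smul_comm, mul_sub, mul_one, hP.eq,
      sub_self, smul_zero, add_zero, trace_smul, htrP]
    simp

end

theorem SQSV_fidelity_certificate_general
    (d : ℕ) (hd : 2 ≤ d) (Ψ : Fin d → ℂ)
    (hΨ : star Ψ ⬝ᵥ Ψ = 1)
    (l : ℝ) (hl0 : 0 ≤ l) (hl1 : l < 1)
    (P Ω : Matrix (Fin d) (Fin d) ℂ)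
    (hP : P = Matrix.vecMulVec Ψ (star Ψ))
    (hΩ : Ω = P + (l : ℂ) • ((1 : Matrix (Fin d) (Fin d) ℂ) - P))
    (k N : ℕ) (hN : k + 1 ≤ N)
    (δ : ℝ) (hδlb : binomCDF N k (1 - l) ≤ δ)
    (J : ℝ) (hJmem : J ∈ Set.Icc (0 : ℝ) 1) (hJ : binomCDF N k J = δ) :
    IsLeast
      { x : ℝ | ∃ σ : Matrix (Fin d) (Fin d) ℂ,
          σ.PosSemidef ∧ σ.trace = 1 ∧
          δ ≤ binomCDF N k (1 - ((Ω * σ).trace).re) ∧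
          x = (star Ψ ⬝ᵥ σ.mulVec Ψ).re }
      (1 - J / (1 - l)) := by
  subst hP hΩ hJ
  have hν : 0 < 1 - l := sub_pos.mpr hl1
  have hanti := binomCDF_strictAntiOn hN
  have hJle : J ≤ 1 - l :=
    (hanti.le_iff_ge ⟨hν.le, by linarith⟩ hJmem).mp hδlb
  have hx : 1 - J / (1 - l) ∈ Set.Icc 0 1 :=
    ⟨sub_nonneg.mpr ((div_le_one hν).mpr hJle), by linarith [div_nonneg hJmem.1 hν.le]⟩
  constructor
  · obtain ⟨σ, hσ, htr, hfid⟩ := exists_density_matrix_dotProduct_mulVec_eq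
      (by rwa [Fintype.card_fin]) hΨ hx
    refine ⟨σ, hσ, htr, ?_, by rw [hfid, Complex.ofReal_re]⟩
    rw [one_sub_re_trace_homogeneous_mul Ψ l htr, hfid, Complex.ofReal_re,
      sub_sub_cancel, mul_div_cancel₀ _ hν.ne']
  · rintro _ ⟨σ, hσ, htr, hpass, rfl⟩
    have hfid := re_dotProduct_mulVec_mem_Icc hΨ hσ htr
    rw [one_sub_re_trace_homogeneous_mul Ψ l htr] at hpass
    have hfail : (1 - l) * (1 - (star Ψ ⬝ᵥ σ *ᵥ Ψ).re) ≤ J :=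
      (hanti.le_iff_ge hJmem ⟨mul_nonneg hν.le (sub_nonneg.mpr hfid.2), by nlinarith [hfid.1]⟩).mp
        hpass
    rw [sub_le_comm, le_div_iff₀ hν]
    linarith

theorem SQSV_fidelity_certificate
    (d : ℕ) (hd : 2 ≤ d) (Ψ : Fin d → ℂ)
    (hΨ : star Ψ ⬝ᵥ Ψ = 1)
    (l : ℝ) (hl0 : 0 ≤ l) (hl1 : l < 1)
    (P Ω : Matrix (Fin d) (Fin d) ℂ)
    (hP : P = Matrix.vecMulVec Ψ (star Ψ))
    (hΩ : Ω = P + (l : ℂ) • ((1 : Matrix (Fin d) (Fin d) ℂ) - P))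
    (k N : ℕ) (hN : k + 1 ≤ N)
    (δ : ℝ) (hδlb : binomCDF N k (1 - l) ≤ δ) (hδ1 : δ ≤ 1)
    (J : ℝ) (hJmem : J ∈ Set.Icc (0 : ℝ) 1) (hJ : binomCDF N k J = δ) :
    IsLeast
      { x : ℝ | ∃ σ : Matrix (Fin d) (Fin d) ℂ,
          σ.PosSemidef ∧ σ.trace = 1 ∧
          δ ≤ binomCDF N k (1 - ((Ω * σ).trace).re) ∧
          x = (star Ψ ⬝ᵥ σ.mulVec Ψ).re }
      (1 - J / (1 - l)) :=
  SQSV_fidelity_certificate_general d hd Ψ hΨ l hl0 hl1 P Ω hP hΩ k N hN δ hδlb J hJmem hJ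
end

section
/- Let 0 < λ < 1, set ν = 1 − λ, and let k, N be integers with k ≥ 0 and N ≥ k + 1. Define h_z(k,N,λ) := 1 for integers 0 ≤ z ≤ k, and h_z(k,N,λ) := [(N−z+1) B_{z,k}(ν) + z B_{z−1,k}(ν)]/(N+1) for integers k+1 ≤ z ≤ N+1. Then h_z(k,N,λ) is strictly decreasing in z for k ≤ z ≤ N+1; that is, for all integers z, z' with k ≤ z < z' ≤ N+1, h_{z'}(k,N,λ) < h_z(k,N,λ). -/
/-- The function `h_z(k, N, λ)` from the defensive QSV analysis, where `ν = 1 - λ`. -/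
noncomputable def hFun (k N : ℕ) (l : ℝ) (z : ℕ) : ℝ :=
  if z ≤ k then 1
  else (((N : ℝ) - z + 1) * binomCDF z k (1 - l)
        + (z : ℝ) * binomCDF (z - 1) k (1 - l)) / ((N : ℝ) + 1)

lemma binomCDF_self (k : ℕ) (p : ℝ) : binomCDF k k p = 1 := by
  have h : binomCDF k k p = (p + (1 - p)) ^ k := by
    rw [add_pow, binomCDF]
    exact Finset.sum_congr rfl fun j _ => by ring
  rw [h]; norm_num

lemma binomCDF_succ : ∀ (k z : ℕ), k ≤ z → ∀ p : ℝ,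
    binomCDF (z + 1) k p
      = binomCDF z k p - (z.choose k : ℝ) * p ^ (k + 1) * (1 - p) ^ (z - k) := by
  intro k
  induction k with
  | zero =>
    intro z _ p
    rw [binomCDF, binomCDF, Finset.sum_range_one, Finset.sum_range_one]
    simp only [Nat.choose_zero_right, Nat.cast_one, pow_zero, Nat.sub_zero, one_mul, mul_one]
    ring
  | succ k ih =>
    intro z hz p
    have hz' : k ≤ z := Nat.le_of_succ_le hz
    have h1 : binomCDF z (k + 1) p
        = binomCDF z k p + (z.choose (k + 1) : ℝ) * p ^ (k + 1) * (1 - p) ^ (z - (k + 1)) := by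
      rw [binomCDF, binomCDF, Finset.sum_range_succ]
    have h2 : binomCDF (z + 1) (k + 1) p
        = binomCDF (z + 1) k p
          + ((z + 1).choose (k + 1) : ℝ) * p ^ (k + 1) * (1 - p) ^ (z + 1 - (k + 1)) := by
      rw [binomCDF, binomCDF, Finset.sum_range_succ]
    have e1 : z + 1 - (k + 1) = z - k := by omega
    have e2 : z - k = (z - (k + 1)) + 1 := by omega
    rw [h2, h1, ih z hz' p, e1, Nat.choose_succ_succ, e2]
    push_cast
    ring

lemma hFun_step (l : ℝ) (hl0 : 0 < l) (hl1 : l < 1) (k N : ℕ) (hN : k + 1 ≤ N)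
    (z : ℕ) (hkz : k ≤ z) (hzN : z ≤ N) :
    hFun k N l (z + 1) < hFun k N l z := by
  set p := 1 - l with hp
  have hp0 : 0 < p := by simp [hp]; linarith
  have hp1 : p < 1 := by simp [hp]; linarith
  have hq0 : 0 < 1 - p := by linarith
  have hNpos : (0:ℝ) < (N : ℝ) + 1 := by positivity
  rcases eq_or_lt_of_le hkz with h | h
  · -- z = k
    subst h
    rw [hFun, hFun, if_pos le_rfl, if_neg (by omega)]
    have e1 := binomCDF_succ k k le_rfl p
    rw [binomCDF_self, Nat.choose_self, Nat.sub_self] at e1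
    simp only [Nat.cast_one, pow_zero, mul_one, one_mul] at e1
    have e0 : (k + 1 : ℕ) - 1 = k := by omega
    rw [e0, e1, binomCDF_self, div_lt_one hNpos]
    have hzN' : (k : ℝ) + 1 ≤ (N : ℝ) := by exact_mod_cast hN
    have hppos : 0 < p ^ (k + 1) := pow_pos hp0 _
    push_cast
    nlinarith [mul_pos (by linarith : (0:ℝ) < (N:ℝ) - k) hppos]
  · -- z > k, so z = w + 1 with k ≤ w
    obtain ⟨w, rfl⟩ : ∃ w, z = w + 1 := ⟨z - 1, by omega⟩
    have hkw : k ≤ w := by omega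
    rw [hFun, hFun, if_neg (by omega), if_neg (by omega)]
    have e0 : (w + 1 : ℕ) - 1 = w := by omega
    have e0' : (w + 1 + 1 : ℕ) - 1 = w + 1 := by omega
    rw [e0, e0', div_lt_div_iff_of_pos_right hNpos]
    have d0 := binomCDF_succ k w hkw p
    have d1 := binomCDF_succ k (w + 1) (by omega) p
    have ew : w + 1 - k = (w - k) + 1 := by omega
    rw [d0, ew] at d1
    rw [d0, d1]
    have hc0 : (0:ℝ) < (w.choose k : ℝ) := by
      exact_mod_cast Nat.choose_pos hkw
    have hd0pos : 0 < (w.choose k : ℝ) * p ^ (k + 1) * (1 - p) ^ (w - k) := by positivity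
    have hd1pos : 0 < ((w + 1).choose k : ℝ) * p ^ (k + 1) * (1 - p) ^ (w - k + 1) := by
      have : (0:ℝ) < ((w + 1).choose k : ℝ) := by
        exact_mod_cast Nat.choose_pos (by omega : k ≤ w + 1)
      positivity
    have hwN : ((w : ℝ) + 1) + 1 ≤ (N : ℝ) + 1 := by
      have : (w : ℝ) + 1 ≤ (N : ℝ) := by exact_mod_cast hzN
      linarith
    push_cast
    nlinarith [mul_nonneg (by linarith : (0:ℝ) ≤ (N:ℝ) - w - 1) hd1pos.le,
      mul_pos (by positivity : (0:ℝ) < (w:ℝ) + 1) hd0pos]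

theorem hFun_strict_anti (l : ℝ) (hl0 : 0 < l) (hl1 : l < 1)
    (k N : ℕ) (hN : k + 1 ≤ N) :
    ∀ z z' : ℕ, k ≤ z → z < z' → z' ≤ N + 1 →
      hFun k N l z' < hFun k N l z := by
  intro z z' hkz hzz' hz'N
  induction z' with
  | zero => omega
  | succ n ih =>
    rcases Nat.lt_or_ge z n with h | h
    · exact lt_trans (hFun_step l hl0 hl1 k N hN n (by omega) (by omega))
        (ih h (by omega))
    · have : z = n := by omega
      subst this
      exact hFun_step l hl0 hl1 k N hN z hkz (by omega)
end

section
/- Let 0 < λ < 1, set ν = 1 − λ, and let k, N be integers with k ≥ 0 and N ≥ k + 1. Define h_z(k,N,λ) := 1 for integers 0 ≤ z ≤ k, and h_z(k,N,λ) := [(N−z+1) B_{z,k}(ν) + z B_{z−1,k}(ν)]/(N+1) for integers k+1 ≤ z ≤ N+1. Then h_{N+1}(k,N,λ) = B_{N,k}(ν), and for every integer z with 0 ≤ z ≤ N+1 one has B_{N,k}(ν) ≤ h_z(k,N,λ) ≤ 1. -/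
/-!
`B_{z,k}(p)` is nonincreasing in `z`: by Pascal's rule
`B_{z+1,k+1} = (1 - p) B_{z,k+1} + p B_{z,k}`, a convex combination of `B_{z,k+1}` and the
smaller `B_{z,k}`. Hence `B_{N,k} ≤ B_{z,k} ≤ B_{0,k} = 1` for `z ≤ N`. For `k < z ≤ N`,
`h_z` is a convex combination of `B_{z,k}` and `B_{z-1,k}`, so it lies in `[B_{N,k}, 1]`;
at `z = N + 1` the weight of `B_{N+1,k}` vanishes and `h_{N+1} = B_{N,k}`.
-/

open Finset

noncomputable def binomTerm (z j : ℕ) (p : ℝ) : ℝ :=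
  (z.choose j : ℝ) * p ^ j * (1 - p) ^ (z - j)

lemma binomCDF_eq_sum_binomTerm (z k : ℕ) (p : ℝ) :
    binomCDF z k p = ∑ j ∈ range (k + 1), binomTerm z j p := rfl

section

variable {p : ℝ}

lemma binomTerm_nonneg (hp0 : 0 ≤ p) (hp1 : p ≤ 1) (z j : ℕ) : 0 ≤ binomTerm z j p := by
  have : 0 ≤ 1 - p := by linarith
  unfold binomTerm
  positivity

lemma binomTerm_succ_zero (z : ℕ) : binomTerm (z + 1) 0 p = (1 - p) * binomTerm z 0 p := by
  simp [binomTerm, pow_succ, mul_comm]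

lemma binomTerm_succ_succ (z j : ℕ) :
    binomTerm (z + 1) (j + 1) p = p * binomTerm z j p + (1 - p) * binomTerm z (j + 1) p := by
  simp only [binomTerm, Nat.choose_succ_succ', Nat.cast_add, Nat.succ_sub_succ]
  rcases lt_or_ge j z with hjz | hzj
  · rw [show z - j = z - (j + 1) + 1 by omega]
    ring
  · rw [Nat.choose_eq_zero_of_lt (by omega : z < j + 1), Nat.sub_eq_zero_of_le hzj,
      Nat.sub_eq_zero_of_le (by omega : z ≤ j + 1)]
    ring

lemma binomCDF_succ_succ (z k : ℕ) :
    binomCDF (z + 1) (k + 1) p = (1 - p) * binomCDF z (k + 1) p + p * binomCDF z k p := by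
  simp only [binomCDF_eq_sum_binomTerm, sum_range_succ' (binomTerm (z + 1) · p),
    sum_range_succ' (binomTerm z · p) (k + 1), binomTerm_succ_succ, binomTerm_succ_zero,
    sum_add_distrib, ← mul_sum]
  ring

lemma binomCDF_zero_right (z : ℕ) : binomCDF z 0 p = (1 - p) ^ z := by
  simp [binomCDF]

lemma binomCDF_zero_left (k : ℕ) : binomCDF 0 k p = 1 := by
  rw [binomCDF, sum_range_succ']
  simp

lemma binomCDF_le_binomCDF_succ_right (hp0 : 0 ≤ p) (hp1 : p ≤ 1) (z k : ℕ) :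
    binomCDF z k p ≤ binomCDF z (k + 1) p := by
  rw [binomCDF_eq_sum_binomTerm, binomCDF_eq_sum_binomTerm, sum_range_succ _ (k + 1)]
  linarith [binomTerm_nonneg hp0 hp1 z (k + 1)]

lemma binomCDF_succ_left_le (hp0 : 0 ≤ p) (hp1 : p ≤ 1) (z k : ℕ) :
    binomCDF (z + 1) k p ≤ binomCDF z k p := by
  cases k with
  | zero =>
    rw [binomCDF_zero_right, binomCDF_zero_right]
    exact pow_le_pow_of_le_one (by linarith) (by linarith) z.le_succ
  | succ k =>
    rw [binomCDF_succ_succ]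
    nlinarith [binomCDF_le_binomCDF_succ_right hp0 hp1 z k]

lemma binomCDF_antitone_left (hp0 : 0 ≤ p) (hp1 : p ≤ 1) (k : ℕ) :
    Antitone (binomCDF · k p) :=
  antitone_nat_of_succ_le fun z => binomCDF_succ_left_le hp0 hp1 z k

lemma binomCDF_le_one (hp0 : 0 ≤ p) (hp1 : p ≤ 1) (z k : ℕ) : binomCDF z k p ≤ 1 :=
  binomCDF_zero_left (p := p) k ▸ binomCDF_antitone_left hp0 hp1 k z.zero_le

end

lemma hFun_of_le (k N : ℕ) (l : ℝ) {z : ℕ} (hz : z ≤ k) : hFun k N l z = 1 :=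
  if_pos hz

lemma hFun_succ_self {k N : ℕ} (l : ℝ) (hk : k ≤ N) :
    hFun k N l (N + 1) = binomCDF N k (1 - l) := by
  rw [hFun, if_neg (by omega), Nat.add_sub_cancel]
  push_cast
  field_simp
  ring

lemma hFun_mem_Icc {k N : ℕ} {l : ℝ} (hl0 : 0 ≤ l) (hl1 : l ≤ 1) {z : ℕ} (hkz : k < z)
    (hzN : z ≤ N) : binomCDF N k (1 - l) ≤ hFun k N l z ∧ hFun k N l z ≤ 1 := by
  have hp0 : 0 ≤ 1 - l := by linarith
  have hp1 : 1 - l ≤ 1 := by linarith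
  have hN : (0 : ℝ) < N + 1 := by positivity
  have hzN' : (z : ℝ) ≤ N := by exact_mod_cast hzN
  have hz0 : (0 : ℝ) ≤ z := z.cast_nonneg
  have hB := binomCDF_antitone_left hp0 hp1 k hzN
  have hB' := binomCDF_antitone_left hp0 hp1 k (z.sub_le 1 |>.trans hzN)
  have hB1 := binomCDF_le_one hp0 hp1 z k
  have hB1' := binomCDF_le_one hp0 hp1 (z - 1) k
  rw [hFun, if_neg hkz.not_ge, le_div_iff₀ hN, div_le_one hN]
  constructor <;> nlinarith

theorem hFun_bounds (l : ℝ) (hl0 : 0 < l) (hl1 : l < 1)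
    (k N : ℕ) (hN : k + 1 ≤ N) :
    hFun k N l (N + 1) = binomCDF N k (1 - l) ∧
    ∀ z : ℕ, z ≤ N + 1 →
      binomCDF N k (1 - l) ≤ hFun k N l z ∧ hFun k N l z ≤ 1 := by
  have hp0 : 0 ≤ 1 - l := by linarith
  have hp1 : 1 - l ≤ 1 := by linarith
  have hlast := hFun_succ_self l (by omega : k ≤ N)
  refine ⟨hlast, fun z hz => ?_⟩
  rcases le_or_gt z k with hzk | hkz
  · rw [hFun_of_le k N l hzk]
    exact ⟨binomCDF_le_one hp0 hp1 N k, le_rfl⟩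
  rcases hz.lt_or_eq with hzN | rfl
  · exact hFun_mem_Icc hl0.le hl1.le hkz (Nat.lt_succ_iff.mp hzN)
  · rw [hlast]
    exact ⟨le_rfl, binomCDF_le_one hp0 hp1 N k⟩
end

section
/- Let d ≥ 2, let Ψ ∈ ℂ^d be a unit vector with rank-one projector P = Ψ Ψ†, let 0 < λ < 1, set ν = 1 − λ, and let Ω = P + λ(I − P) and Ω̄ = I − Ω. Let k, N be integers with k ≥ 0 and N ≥ k + 1, and let δ be a real number with 0 < δ ≤ B_{N,k}(ν). For each integer 0 ≤ i ≤ k let T_i be the operator on (ℂ^d)^{⊗(N+1)} acting as Ω on the first N−i tensor factors, as Ω̄ on the next i factors, and as the identity on the last factor, and let S_i be the same operator with the last factor replaced by P. For a permutation-invariant density matrix ρ on (ℂ^d)^{⊗(N+1)}, set p_k(ρ) := ∑_{i=0}^{k} C(N,i) tr(T_i ρ) and f_k(ρ) := ∑_{i=0}^{k} C(N,i) tr(S_i ρ). Then the set { f_k(ρ)/p_k(ρ) : ρ a permutation-invariant density matrix on (ℂ^d)^{⊗(N+1)} with p_k(ρ) ≥ δ } has least element 0; that is, the defensive-QSV fidelity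 certificate satisfies F^D_λ(k,N,δ) = 0 whenever δ ≤ B_{N,k}(ν). -/
open Matrix ComplexOrder

/-- The tensor product of a family of `d × d` matrices, as a matrix whose rows and
columns are indexed by functions `Fin n → Fin d`. -/
def tensorFamily {n d : ℕ} (A : Fin n → Matrix (Fin d) (Fin d) ℂ) :
    Matrix (Fin n → Fin d) (Fin n → Fin d) ℂ :=
  Matrix.of fun f g => ∏ j, A j (f j) (g j)

/-- The operator on `(ℂ^d)^{⊗(N+1)}` acting as `Ω` on the first `N - i` factors,
as `Ω̄ = 1 - Ω` on the next `i` factors, and as `E` on the last factor. -/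
def testOp {d : ℕ} (N i : ℕ) (Ω E : Matrix (Fin d) (Fin d) ℂ) :
    Matrix (Fin (N + 1) → Fin d) (Fin (N + 1) → Fin d) ℂ :=
  tensorFamily fun j =>
    if (j : ℕ) < N - i then Ω else if (j : ℕ) < N then 1 - Ω else E

/-!
Every `testOp N i Ω E` with `E ∈ {P, 1}` is a tensor product of positive semidefinite
factors (`Ω = P + λ(1 - P)`, `1 - Ω = ν(1 - P)` and `E`), so both `f_k(ρ)` and `p_k(ρ)` are
nonnegative and every quotient in the set is `≥ 0`. The value `0` is attained by the product
state `ρ = Q^{⊗(N+1)}` of a density matrix `Q` with `PQ = 0`, which exists because `d ≥ 2`: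
then `tr(ΩQ) = λ`, `tr((1 - Ω)Q) = ν` and `tr(PQ) = 0`, so `p_k(ρ) = B_{N,k}(ν) ≥ δ` while
`f_k(ρ) = 0`.
-/

open scoped MatrixOrder

section RCLike

variable {𝕜 n : Type*} [RCLike 𝕜] [Fintype n]

theorem Matrix.PosSemidef.trace_mul_nonneg [DecidableEq n] {S ρ : Matrix n n 𝕜}
    (hS : S.PosSemidef) (hρ : ρ.PosSemidef) : 0 ≤ (S * ρ).trace := by
  obtain ⟨B, rfl⟩ := CStarAlgebra.nonneg_iff_eq_star_mul_self.mp hS.nonneg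
  rw [star_eq_conjTranspose, Matrix.mul_assoc, trace_mul_comm]
  exact (hρ.mul_mul_conjTranspose_same B).trace_nonneg

theorem isStarProjection_vecMulVec_self_star {Ψ : n → 𝕜} (hΨ : star Ψ ⬝ᵥ Ψ = 1) :
    IsStarProjection (vecMulVec Ψ (star Ψ)) where
  isIdempotentElem := by
    rw [IsIdempotentElem, vecMulVec_mul_vecMulVec, hΨ, one_smul]
  isSelfAdjoint := by
    rw [IsSelfAdjoint, star_eq_conjTranspose, conjTranspose_vecMulVec, star_star]

theorem exists_posSemidef_trace_eq_one_vecMulVec_mul_eq_zero (hn : 1 < Fintype.card n)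
    (Ψ : n → 𝕜) :
    ∃ Q : Matrix n n 𝕜, Q.PosSemidef ∧ Q.trace = 1 ∧ vecMulVec Ψ (star Ψ) * Q = 0 := by
  obtain ⟨v, hv, hv0⟩ := Submodule.exists_mem_ne_zero_of_ne_bot <|
    LinearMap.ker_ne_bot_of_finrank_lt (f := dotProductBilin 𝕜 𝕜 (star Ψ))
      (by simpa using hn)
  have hs : 0 < star v ⬝ᵥ v := dotProduct_star_self_pos_iff.mpr hv0
  refine ⟨(star v ⬝ᵥ v)⁻¹ • vecMulVec v (star v),
    (posSemidef_vecMulVec_self_star v).smul (inv_nonneg.mpr hs.le), ?_, ?_⟩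
  · rw [trace_smul, trace_vecMulVec, dotProduct_comm v, smul_eq_mul, inv_mul_cancel₀ hs.ne']
  · rw [Matrix.mul_smul, vecMulVec_mul_vecMulVec, show star Ψ ⬝ᵥ v = 0 from hv, zero_smul,
      vecMulVec_zero, smul_zero]

end RCLike

theorem posSemidef_add_smul_one_sub {n : Type*} [Fintype n] [DecidableEq n]
    {P : Matrix n n ℂ} (hP : IsStarProjection P) {l : ℝ} (hl0 : 0 ≤ l) (hl1 : l ≤ 1) :
    (P + (l : ℂ) • (1 - P)).PosSemidef ∧ (1 - (P + (l : ℂ) • (1 - P))).PosSemidef := by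
  have hPc : (1 - P).PosSemidef := nonneg_iff_posSemidef.mp hP.one_sub_nonneg
  refine ⟨(nonneg_iff_posSemidef.mp hP.nonneg).add (hPc.smul (by exact_mod_cast hl0)), ?_⟩
  have h : 1 - (P + (l : ℂ) • (1 - P)) = ((1 - l : ℝ) : ℂ) • (1 - P) := by
    push_cast
    module
  exact h ▸ hPc.smul (by exact_mod_cast sub_nonneg.mpr hl1)

section TensorFamily

variable {n d : ℕ}

theorem tensorFamily_mul (A B : Fin n → Matrix (Fin d) (Fin d) ℂ) :
    tensorFamily A * tensorFamily B = tensorFamily fun j => A j * B j := by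
  ext f g
  simp only [tensorFamily, mul_apply, of_apply, ← Finset.prod_mul_distrib]
  exact (Fintype.prod_sum fun j m => A j (f j) m * B j m (g j)).symm

theorem tensorFamily_conjTranspose (A : Fin n → Matrix (Fin d) (Fin d) ℂ) :
    (tensorFamily A)ᴴ = tensorFamily fun j => (A j)ᴴ := by
  ext f g
  simp [tensorFamily, conjTranspose_apply, star_prod]

theorem trace_tensorFamily (A : Fin n → Matrix (Fin d) (Fin d) ℂ) :
    (tensorFamily A).trace = ∏ j, (A j).trace := by
  simp only [trace, diag, tensorFamily, of_apply]
  exact (Fintype.prod_sum fun j m => A j m m).symm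

theorem posSemidef_tensorFamily {A : Fin n → Matrix (Fin d) (Fin d) ℂ}
    (hA : ∀ j, (A j).PosSemidef) : (tensorFamily A).PosSemidef := by
  choose B hB using fun j => CStarAlgebra.nonneg_iff_eq_star_mul_self.mp (hA j).nonneg
  have h : tensorFamily A = (tensorFamily B)ᴴ * tensorFamily B := by
    rw [tensorFamily_conjTranspose, tensorFamily_mul]
    exact congrArg tensorFamily (funext hB)
  exact h ▸ posSemidef_conjTranspose_mul_self _

theorem tensorFamily_const_apply_comp (Q : Matrix (Fin d) (Fin d) ℂ) (π : Equiv.Perm (Fin n))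
    (f g : Fin n → Fin d) :
    tensorFamily (fun _ => Q) (f ∘ π) (g ∘ π) = tensorFamily (fun _ => Q) f g :=
  Equiv.prod_comp π fun j => Q (f j) (g j)

end TensorFamily

section TestOp

variable {d N : ℕ} {Ω E : Matrix (Fin d) (Fin d) ℂ}

theorem posSemidef_testOp (i : ℕ) (hΩ : Ω.PosSemidef) (hΩc : (1 - Ω).PosSemidef)
    (hE : E.PosSemidef) : (testOp N i Ω E).PosSemidef :=
  posSemidef_tensorFamily fun _ => by split_ifs <;> assumption

theorem trace_testOp_mul_tensorFamily {i : ℕ} (hi : i ≤ N)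
    (Ω E Q : Matrix (Fin d) (Fin d) ℂ) :
    (testOp N i Ω E * tensorFamily fun _ => Q).trace
      = (Ω * Q).trace ^ (N - i) * ((1 - Ω) * Q).trace ^ i * (E * Q).trace := by
  rw [testOp, tensorFamily_mul, trace_tensorFamily, Fin.prod_univ_eq_prod_range
      (fun j => ((if j < N - i then Ω else if j < N then 1 - Ω else E) * Q).trace),
    ← Finset.prod_range_mul_prod_Ico _ (by omega : N - i ≤ N + 1),
    Finset.prod_Ico_succ_top (Nat.sub_le N i), if_neg (by omega), if_neg (by omega),
    Finset.prod_eq_pow_card fun j hj => by rw [if_pos (Finset.mem_range.mp hj)],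
    Finset.prod_eq_pow_card fun j hj => by
      rw [Finset.mem_Ico] at hj; rw [if_neg (by omega), if_pos hj.2],
    Finset.card_range, Nat.card_Ico, Nat.sub_sub_self hi, mul_assoc]

theorem sum_choose_mul_trace_testOp_mul_tensorFamily (k : ℕ) {Q : Matrix (Fin d) (Fin d) ℂ}
    {l : ℝ} (hQ : Q.trace = 1) (hΩQ : (Ω * Q).trace = l) :
    ∑ i ∈ Finset.range (k + 1),
        (N.choose i : ℂ) * (testOp N i Ω E * tensorFamily fun _ => Q).trace
      = binomCDF N k (1 - l) * (E * Q).trace := by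
  have hΩcQ : ((1 - Ω) * Q).trace = 1 - l := by
    rw [Matrix.sub_mul, Matrix.one_mul, trace_sub, hQ, hΩQ]
  rw [binomCDF, Complex.ofReal_sum, Finset.sum_mul]
  refine Finset.sum_congr rfl fun i _ => ?_
  rcases le_or_gt i N with hi | hi
  · rw [trace_testOp_mul_tensorFamily hi, hΩQ, hΩcQ]
    push_cast
    ring
  · simp [Nat.choose_eq_zero_of_lt hi]

theorem re_sum_choose_mul_trace_testOp_mul_nonneg (k : ℕ)
    {ρ : Matrix (Fin (N + 1) → Fin d) (Fin (N + 1) → Fin d) ℂ} (hΩ : Ω.PosSemidef)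
    (hΩc : (1 - Ω).PosSemidef) (hE : E.PosSemidef) (hρ : ρ.PosSemidef) :
    0 ≤ (∑ i ∈ Finset.range (k + 1), (N.choose i : ℂ) * (testOp N i Ω E * ρ).trace).re :=
  (Complex.le_def.mp <| Finset.sum_nonneg fun i _ => mul_nonneg (Nat.cast_nonneg _)
    ((posSemidef_testOp i hΩ hΩc hE).trace_mul_nonneg hρ)).1

end TestOp

theorem DQSV_fidelity_certificate_zero_general
    (d : ℕ) (hd : 2 ≤ d) (Ψ : Fin d → ℂ)
    (hΨ : star Ψ ⬝ᵥ Ψ = 1)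
    (l : ℝ) (hl0 : 0 < l) (hl1 : l < 1)
    (P Ω : Matrix (Fin d) (Fin d) ℂ)
    (hP : P = Matrix.vecMulVec Ψ (star Ψ))
    (hΩ : Ω = P + (l : ℂ) • ((1 : Matrix (Fin d) (Fin d) ℂ) - P))
    (k N : ℕ)
    (δ : ℝ) (hδub : δ ≤ binomCDF N k (1 - l)) :
    IsLeast
      { x : ℝ | ∃ ρ : Matrix (Fin (N + 1) → Fin d) (Fin (N + 1) → Fin d) ℂ,
          ρ.PosSemidef ∧ ρ.trace = 1 ∧
          (∀ π : Equiv.Perm (Fin (N + 1)), ∀ f g : Fin (N + 1) → Fin d,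
            ρ (f ∘ π) (g ∘ π) = ρ f g) ∧
          δ ≤ (∑ i ∈ Finset.range (k + 1),
                (N.choose i : ℂ) * (testOp N i Ω 1 * ρ).trace).re ∧
          x = (∑ i ∈ Finset.range (k + 1),
                (N.choose i : ℂ) * (testOp N i Ω P * ρ).trace).re /
              (∑ i ∈ Finset.range (k + 1),
                (N.choose i : ℂ) * (testOp N i Ω 1 * ρ).trace).re }
      (0 : ℝ) := by
  have hPproj : IsStarProjection P := hP ▸ isStarProjection_vecMulVec_self_star hΨ
  obtain ⟨hΩpsd, hΩcpsd⟩ := hΩ ▸ posSemidef_add_smul_one_sub hPproj hl0.le hl1.le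
  constructor
  · obtain ⟨Q, hQ, hQtr, hPQ⟩ := exists_posSemidef_trace_eq_one_vecMulVec_mul_eq_zero
      (by rw [Fintype.card_fin]; exact hd) Ψ
    rw [← hP] at hPQ
    have hΩQ : (Ω * Q).trace = l := by
      rw [hΩ, Matrix.add_mul, Matrix.smul_mul, Matrix.sub_mul, hPQ, Matrix.one_mul, sub_zero,
        zero_add, trace_smul, hQtr, smul_eq_mul, mul_one]
    refine ⟨tensorFamily fun _ => Q, posSemidef_tensorFamily fun _ => hQ,
      by simp [trace_tensorFamily, hQtr], tensorFamily_const_apply_comp Q, ?_, ?_⟩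
    · rwa [sum_choose_mul_trace_testOp_mul_tensorFamily k hQtr hΩQ, Matrix.one_mul, hQtr,
        mul_one, Complex.ofReal_re]
    · rw [sum_choose_mul_trace_testOp_mul_tensorFamily k hQtr hΩQ, hPQ, trace_zero, mul_zero,
        Complex.zero_re, zero_div]
  · rintro x ⟨ρ, hρ, -, -, -, rfl⟩
    exact div_nonneg
      (re_sum_choose_mul_trace_testOp_mul_nonneg k hΩpsd hΩcpsd
        (nonneg_iff_posSemidef.mp hPproj.nonneg) hρ)
      (re_sum_choose_mul_trace_testOp_mul_nonneg k hΩpsd hΩcpsd .one hρ)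

theorem DQSV_fidelity_certificate_zero
    (d : ℕ) (hd : 2 ≤ d) (Ψ : Fin d → ℂ)
    (hΨ : star Ψ ⬝ᵥ Ψ = 1)
    (l : ℝ) (hl0 : 0 < l) (hl1 : l < 1)
    (P Ω : Matrix (Fin d) (Fin d) ℂ)
    (hP : P = Matrix.vecMulVec Ψ (star Ψ))
    (hΩ : Ω = P + (l : ℂ) • ((1 : Matrix (Fin d) (Fin d) ℂ) - P))
    (k N : ℕ) (hN : k + 1 ≤ N)
    (δ : ℝ) (hδ0 : 0 < δ) (hδub : δ ≤ binomCDF N k (1 - l)) :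
    IsLeast
      { x : ℝ | ∃ ρ : Matrix (Fin (N + 1) → Fin d) (Fin (N + 1) → Fin d) ℂ,
          ρ.PosSemidef ∧ ρ.trace = 1 ∧
          (∀ π : Equiv.Perm (Fin (N + 1)), ∀ f g : Fin (N + 1) → Fin d,
            ρ (f ∘ π) (g ∘ π) = ρ f g) ∧
          δ ≤ (∑ i ∈ Finset.range (k + 1),
                (N.choose i : ℂ) * (testOp N i Ω 1 * ρ).trace).re ∧
          x = (∑ i ∈ Finset.range (k + 1),
                (N.choose i : ℂ) * (testOp N i Ω P * ρ).trace).re /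
              (∑ i ∈ Finset.range (k + 1),
                (N.choose i : ℂ) * (testOp N i Ω 1 * ρ).trace).re }
      (0 : ℝ) :=
  DQSV_fidelity_certificate_zero_general d hd Ψ hΨ l hl0 hl1 P Ω hP hΩ k N δ hδub
end
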